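/- arXiv:2601.22813 — 4 statements merged into one kernel-verified Lean document; each statement's English description precedes it below -/
import Mathlib

section
/- Let a < b be real numbers and let X be uniformly distributed on [a,b]. Then E[(RTN(X) − X)²] = (b−a)²/12, where RTN(X) denotes the endpoint of {a,b} nearest to X, while E[(SR_{[a,b]}(X) − X)²] = (b−a)²/6 (expectation over both X and the rounding randomness). Hence stochastic rounding incurs exactly twice the mean squared error of round-to-nearest for uniform inputs. -/
/-!
Round-to-nearest moves `x ∈ [a, b]` to the nearer endpoint, so its squared error is
`min ((x - a)², (b - x)²)`, whose mean over `[a, b]` is `(b - a)² / 12` (split at the midpoint).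
Stochastic rounding of `x` is a two-point random variable with mean `x`, so its conditional mean
squared error is the Bernoulli variance `(x - a) (b - x)`; averaging over `x` (Fubini) gives
`(b - a)² / 6`.
-/

open MeasureTheory Set

theorem integral_sub_mul_sub (a b : ℝ) : ∫ x in a..b, (x - a) * (b - x) = (b - a) ^ 3 / 6 := by
  have e : (fun x : ℝ => (x - a) * (b - x)) = fun x => (a + b) * x - x ^ 2 - a * b := by
    ext x; ring
  rw [e, intervalIntegral.integral_sub, intervalIntegral.integral_sub,
    intervalIntegral.integral_const_mul, integral_id, integral_pow, intervalIntegral.integral_const]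
  · simp only [smul_eq_mul]; ring
  all_goals exact Continuous.intervalIntegrable (by fun_prop) _ _

theorem integral_min_sq_sub_sq_of_le {a b : ℝ} (hab : a ≤ b) :
    ∫ x in a..b, min ((x - a) ^ 2) ((b - x) ^ 2) = (b - a) ^ 3 / 12 := by
  obtain ⟨m, hm⟩ : ∃ m, m = (a + b) / 2 := ⟨_, rfl⟩
  have hcont : Continuous fun x : ℝ => min ((x - a) ^ 2) ((b - x) ^ 2) := by fun_prop
  have hleft : ∫ x in a..m, min ((x - a) ^ 2) ((b - x) ^ 2) = ∫ x in a..m, (x - a) ^ 2 := by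
    refine intervalIntegral.integral_congr fun x hx => min_eq_left ?_
    rw [uIcc_of_le (by linarith)] at hx
    nlinarith [hx.1, hx.2]
  have hright : ∫ x in m..b, min ((x - a) ^ 2) ((b - x) ^ 2) = ∫ x in m..b, (b - x) ^ 2 := by
    refine intervalIntegral.integral_congr fun x hx => min_eq_right ?_
    rw [uIcc_of_le (by linarith)] at hx
    nlinarith [hx.1, hx.2]
  rw [← intervalIntegral.integral_add_adjacent_intervals (b := m) (hcont.intervalIntegrable _ _)
    (hcont.intervalIntegrable _ _), hleft, hright,
    intervalIntegral.integral_comp_sub_right (fun x => x ^ 2),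
    intervalIntegral.integral_comp_sub_left (fun x => x ^ 2), integral_pow, integral_pow, hm]
  ring

theorem integral_min_sq_sub_sq (a b : ℝ) :
    ∫ x in a..b, min ((x - a) ^ 2) ((b - x) ^ 2) = (b - a) ^ 3 / 12 := by
  rcases le_total a b with hab | hba
  · exact integral_min_sq_sub_sq_of_le hab
  · have hswap : ∫ x in b..a, min ((x - a) ^ 2) ((b - x) ^ 2) =
        ∫ x in b..a, min ((x - b) ^ 2) ((a - x) ^ 2) :=
      intervalIntegral.integral_congr fun x _ => by
        rw [min_comm, ← neg_sub x b, ← neg_sub a x, neg_sq, neg_sq]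
    rw [intervalIntegral.integral_symm, hswap, integral_min_sq_sub_sq_of_le hba]
    ring

theorem sq_sub_eq_min_of_nearest {r a b x : ℝ} (hr : r = a ∨ r = b) (ha : |r - x| ≤ |a - x|)
    (hb : |r - x| ≤ |b - x|) : (r - x) ^ 2 = min ((x - a) ^ 2) ((b - x) ^ 2) := by
  have ha' : (r - x) ^ 2 ≤ (x - a) ^ 2 := by
    simpa only [sq_abs, abs_sub_comm a x] using pow_le_pow_left₀ (abs_nonneg _) ha 2
  have hb' : (r - x) ^ 2 ≤ (b - x) ^ 2 := by
    simpa only [sq_abs] using pow_le_pow_left₀ (abs_nonneg _) hb 2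
  refine le_antisymm (le_min ha' hb') ?_
  rcases hr with rfl | rfl
  · exact (min_le_left _ _).trans_eq (by ring)
  · exact min_le_right _ _

noncomputable def uniformIcc (a b : ℝ) : Measure ℝ :=
  (ENNReal.ofReal (b - a))⁻¹ • volume.restrict (Icc a b)

theorem isProbabilityMeasure_uniformIcc {a b : ℝ} (hab : a < b) :
    IsProbabilityMeasure (uniformIcc a b) := by
  constructor
  simp only [uniformIcc, Measure.smul_apply, Measure.restrict_apply MeasurableSet.univ,
    univ_inter, Real.volume_Icc, smul_eq_mul]
  exact ENNReal.inv_mul_cancel (by simpa using hab) ENNReal.ofReal_ne_top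

theorem ae_mem_Icc_uniformIcc (a b : ℝ) : ∀ᵐ x ∂uniformIcc a b, x ∈ Icc a b :=
  Measure.ae_smul_measure (ae_restrict_mem measurableSet_Icc) _

theorem integral_uniformIcc {a b : ℝ} (hab : a ≤ b) (f : ℝ → ℝ) :
    ∫ x, f x ∂uniformIcc a b = (b - a)⁻¹ * ∫ x in a..b, f x := by
  rw [uniformIcc, integral_smul_measure, ENNReal.toReal_inv,
    ENNReal.toReal_ofReal (sub_nonneg.2 hab), smul_eq_mul, integral_Icc_eq_integral_Ioc,
    intervalIntegral.integral_of_le hab]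

theorem Continuous.integrable_uniformIcc {a b : ℝ} (hab : a < b) {f : ℝ → ℝ}
    (hf : Continuous f) : Integrable f (uniformIcc a b) :=
  hf.integrableOn_Icc.smul_measure (by simpa using hab)

section TwoPoint

variable {Ω α E : Type*} [MeasurableSpace Ω] {ν : Measure Ω} {Y : Ω → α} {a b : α}

theorem ae_eq_or_eq_of_measure_add_eq_one [MeasurableSpace α] [MeasurableSingletonClass α]
    [IsProbabilityMeasure ν] (hY : Measurable Y) (hab : a ≠ b)
    (h : ν {ω | Y ω = a} + ν {ω | Y ω = b} = 1) : ∀ᵐ ω ∂ν, Y ω = a ∨ Y ω = b := by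
  have hYa : MeasurableSet {ω | Y ω = a} := hY (measurableSet_singleton a)
  have hYb : MeasurableSet {ω | Y ω = b} := hY (measurableSet_singleton b)
  have hunion : {ω | Y ω = a ∨ Y ω = b} = {ω | Y ω = a} ∪ {ω | Y ω = b} := rfl
  refine (ae_iff_measure_eq (hunion ▸ (hYa.union hYb).nullMeasurableSet)).2 ?_
  rw [hunion, measure_union (Set.disjoint_left.2 fun ω ha hb => hab (ha.symm.trans hb)) hYb, h,
    measure_univ]

theorem comp_ae_eq_indicator_add_indicator [AddZeroClass E] (g : α → E) (hab : a ≠ b)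
    (hY : ∀ᵐ ω ∂ν, Y ω = a ∨ Y ω = b) :
    (fun ω => g (Y ω)) =ᵐ[ν]
      {ω | Y ω = a}.indicator (fun _ => g a) + {ω | Y ω = b}.indicator (fun _ => g b) := by
  filter_upwards [hY] with ω hω
  rcases hω with h | h
  · simp [indicator, h, hab]
  · simp [indicator, h, hab.symm]

variable [MeasurableSpace α] [MeasurableSingletonClass α] [IsFiniteMeasure ν]
  [NormedAddCommGroup E] (g : α → E)

theorem integrable_comp_of_ae_eq_or_eq (hY : Measurable Y) (hab : a ≠ b)
    (hY2 : ∀ᵐ ω ∂ν, Y ω = a ∨ Y ω = b) : Integrable (fun ω => g (Y ω)) ν :=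
  (((integrable_const _).indicator (hY (measurableSet_singleton a))).add
    ((integrable_const _).indicator (hY (measurableSet_singleton b)))).congr
    (comp_ae_eq_indicator_add_indicator g hab hY2).symm

theorem integral_comp_of_ae_eq_or_eq [NormedSpace ℝ E] [CompleteSpace E] (hY : Measurable Y)
    (hab : a ≠ b) (hY2 : ∀ᵐ ω ∂ν, Y ω = a ∨ Y ω = b) :
    ∫ ω, g (Y ω) ∂ν = ν.real {ω | Y ω = a} • g a + ν.real {ω | Y ω = b} • g b := by
  have hYa : MeasurableSet {ω | Y ω = a} := hY (measurableSet_singleton a)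
  have hYb : MeasurableSet {ω | Y ω = b} := hY (measurableSet_singleton b)
  rw [integral_congr_ae (comp_ae_eq_indicator_add_indicator g hab hY2),
    integral_add' ((integrable_const _).indicator hYa) ((integrable_const _).indicator hYb),
    integral_indicator_const _ hYa, integral_indicator_const _ hYb]

end TwoPoint

theorem integral_prod_eq_of_ae_integral_eq {α β : Type*} [MeasurableSpace α] [MeasurableSpace β]
    {μ : Measure α} {ν : Measure β} [SFinite μ] [SFinite ν] {f : α × β → ℝ} {g : α → ℝ}
    (hf : AEStronglyMeasurable f (μ.prod ν)) (hf0 : 0 ≤ f)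
    (hsec : ∀ᵐ x ∂μ, Integrable (fun y => f (x, y)) ν ∧ ∫ y, f (x, y) ∂ν = g x)
    (hg : Integrable g μ) : ∫ p, f p ∂(μ.prod ν) = ∫ x, g x ∂μ := by
  have hsec' : (fun x => ∫ y, ‖f (x, y)‖ ∂ν) =ᵐ[μ] g := by
    filter_upwards [hsec] with x hx
    simpa only [Real.norm_of_nonneg (hf0 _)] using hx.2
  have hint : Integrable f (μ.prod ν) :=
    (integrable_prod_iff hf).2 ⟨hsec.mono fun _ hx => hx.1, hg.congr hsec'.symm⟩
  rw [integral_prod f hint]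
  exact integral_congr_ae (hsec.mono fun _ hx => hx.2)

section StochasticRounding

variable {Ω : Type*} [MeasurableSpace Ω]

def IsStochasticRounding (ν : Measure Ω) (a b x : ℝ) (Y : Ω → ℝ) : Prop :=
  ν {ω | Y ω = b} = ENNReal.ofReal ((x - a) / (b - a)) ∧
    ν {ω | Y ω = a} = ENNReal.ofReal ((b - x) / (b - a))

variable {ν : Measure Ω} [IsProbabilityMeasure ν] {a b x : ℝ} {Y : Ω → ℝ}

theorem IsStochasticRounding.ae_eq_or_eq (hSR : IsStochasticRounding ν a b x Y)
    (hY : Measurable Y) (hab : a < b) (hx : x ∈ Icc a b) : ∀ᵐ ω ∂ν, Y ω = a ∨ Y ω = b := by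
  refine ae_eq_or_eq_of_measure_add_eq_one hY hab.ne ?_
  rw [hSR.1, hSR.2, ← ENNReal.ofReal_add (div_nonneg (sub_nonneg.2 hx.2) (sub_nonneg.2 hab.le))
    (div_nonneg (sub_nonneg.2 hx.1) (sub_nonneg.2 hab.le)), ← add_div, sub_add_sub_cancel,
    div_self (sub_pos.2 hab).ne', ENNReal.ofReal_one]

theorem IsStochasticRounding.integrable_sq_sub (hSR : IsStochasticRounding ν a b x Y)
    (hY : Measurable Y) (hab : a < b) (hx : x ∈ Icc a b) :
    Integrable (fun ω => (Y ω - x) ^ 2) ν :=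
  integrable_comp_of_ae_eq_or_eq (fun y => (y - x) ^ 2) hY hab.ne (hSR.ae_eq_or_eq hY hab hx)

theorem IsStochasticRounding.integral_sq_sub (hSR : IsStochasticRounding ν a b x Y)
    (hY : Measurable Y) (hab : a < b) (hx : x ∈ Icc a b) :
    ∫ ω, (Y ω - x) ^ 2 ∂ν = (x - a) * (b - x) := by
  rw [integral_comp_of_ae_eq_or_eq (fun y => (y - x) ^ 2) hY hab.ne (hSR.ae_eq_or_eq hY hab hx),
    measureReal_def, measureReal_def, hSR.1, hSR.2,
    ENNReal.toReal_ofReal (div_nonneg (sub_nonneg.2 hx.2) (sub_nonneg.2 hab.le)),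
    ENNReal.toReal_ofReal (div_nonneg (sub_nonneg.2 hx.1) (sub_nonneg.2 hab.le)), smul_eq_mul,
    smul_eq_mul]
  field_simp [(sub_pos.2 hab).ne']
  ring

end StochasticRounding

theorem sr_vs_rtn_uniform_mse_general (a b : ℝ) (hab : a < b)
    {Ω : Type*} [MeasurableSpace Ω] (ν : Measure Ω) [IsProbabilityMeasure ν]
    (SR : ℝ → Ω → ℝ) (hSRmeas : Measurable (Function.uncurry SR))
    (hSR : ∀ x ∈ Set.Icc a b,
      ν {ω | SR x ω = b} = ENNReal.ofReal ((x - a) / (b - a)) ∧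
      ν {ω | SR x ω = a} = ENNReal.ofReal ((b - x) / (b - a)))
    (RTN : ℝ → ℝ)
    (hRTN : ∀ x ∈ Set.Icc a b, (RTN x = a ∨ RTN x = b) ∧
      |RTN x - x| ≤ |a - x| ∧ |RTN x - x| ≤ |b - x|)
    (μ : Measure ℝ) (hμ : μ = (ENNReal.ofReal (b - a))⁻¹ • volume.restrict (Set.Icc a b)) :
    ∫ x, (RTN x - x) ^ 2 ∂μ = (b - a) ^ 2 / 12 ∧
    ∫ p, (SR p.1 p.2 - p.1) ^ 2 ∂(μ.prod ν) = (b - a) ^ 2 / 6 ∧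
    ∫ p, (SR p.1 p.2 - p.1) ^ 2 ∂(μ.prod ν) = 2 * ∫ x, (RTN x - x) ^ 2 ∂μ := by
  change μ = uniformIcc a b at hμ
  subst hμ
  have := isProbabilityMeasure_uniformIcc hab
  have hRTN_mse : ∫ x, (RTN x - x) ^ 2 ∂uniformIcc a b = (b - a) ^ 2 / 12 := by
    have hmin : (fun x => (RTN x - x) ^ 2) =ᵐ[uniformIcc a b]
        fun x => min ((x - a) ^ 2) ((b - x) ^ 2) := by
      filter_upwards [ae_mem_Icc_uniformIcc a b] with x hx
      exact sq_sub_eq_min_of_nearest (hRTN x hx).1 (hRTN x hx).2.1 (hRTN x hx).2.2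
    rw [integral_congr_ae hmin, integral_uniformIcc hab.le, integral_min_sq_sub_sq]
    field_simp
  have hSR_mse : ∫ p, (SR p.1 p.2 - p.1) ^ 2 ∂(uniformIcc a b).prod ν = (b - a) ^ 2 / 6 := by
    have hf : Measurable fun p : ℝ × Ω => (SR p.1 p.2 - p.1) ^ 2 :=
      (hSRmeas.sub measurable_fst).pow_const 2
    have hsec : ∀ᵐ x ∂uniformIcc a b, Integrable (fun ω => (SR x ω - x) ^ 2) ν ∧
        ∫ ω, (SR x ω - x) ^ 2 ∂ν = (x - a) * (b - x) := by
      filter_upwards [ae_mem_Icc_uniformIcc a b] with x hx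
      have hSRx : IsStochasticRounding ν a b x (SR x) := hSR x hx
      have hmeas : Measurable (SR x) := hSRmeas.comp measurable_prodMk_left
      exact ⟨hSRx.integrable_sq_sub hmeas hab hx, hSRx.integral_sq_sub hmeas hab hx⟩
    rw [integral_prod_eq_of_ae_integral_eq hf.aestronglyMeasurable (fun _ => sq_nonneg _) hsec
      (Continuous.integrable_uniformIcc hab (by fun_prop)), integral_uniformIcc hab.le,
      integral_sub_mul_sub]
    field_simp
  exact ⟨hRTN_mse, hSR_mse, by rw [hRTN_mse, hSR_mse]; ring⟩

/-- Let `a < b` and let `X` be uniformly distributed on `[a,b]`.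
Then `E[(RTN(X) − X)²] = (b−a)²/12`, where `RTN(X)` is the endpoint of `{a,b}` nearest
to `X`, while for stochastic rounding (with its defining distribution, expectation taken
over both `X` and the rounding randomness) `E[(SR_{[a,b]}(X) − X)²] = (b−a)²/6`;
hence stochastic rounding incurs exactly twice the MSE of round-to-nearest. -/
theorem sr_vs_rtn_uniform_mse (a b : ℝ) (hab : a < b)
    {Ω : Type*} [MeasurableSpace Ω] (ν : Measure Ω) [IsProbabilityMeasure ν]
    (SR : ℝ → Ω → ℝ) (hSRmeas : Measurable (Function.uncurry SR))
    (hSR : ∀ x ∈ Set.Icc a b,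
      ν {ω | SR x ω = b} = ENNReal.ofReal ((x - a) / (b - a)) ∧
      ν {ω | SR x ω = a} = ENNReal.ofReal ((b - x) / (b - a)))
    (RTN : ℝ → ℝ) (hRTNmeas : Measurable RTN)
    (hRTN : ∀ x ∈ Set.Icc a b, (RTN x = a ∨ RTN x = b) ∧
      |RTN x - x| ≤ |a - x| ∧ |RTN x - x| ≤ |b - x|)
    (μ : Measure ℝ) (hμ : μ = (ENNReal.ofReal (b - a))⁻¹ • volume.restrict (Set.Icc a b)) :
    ∫ x, (RTN x - x) ^ 2 ∂μ = (b - a) ^ 2 / 12 ∧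
    ∫ p, (SR p.1 p.2 - p.1) ^ 2 ∂(μ.prod ν) = (b - a) ^ 2 / 6 ∧
    ∫ p, (SR p.1 p.2 - p.1) ^ 2 ∂(μ.prod ν) = 2 * ∫ x, (RTN x - x) ^ 2 ∂μ :=
  sr_vs_rtn_uniform_mse_general a b hab ν SR hSRmeas hSR RTN hRTN μ hμ
end

section
/- Let d be a positive multiple of 16 and let x ∈ ℝ^d with x ≠ 0. Partition {1,…,d} into groups of 16 consecutive indices, set the global scale c = (max_i |x_i|) / (6·(16/17)·448), and for each group g set the normalized group maximum y_g = (max_{i ∈ g} |x_i|) / (c·6·(16/17)). Suppose the group scales s_g > 0 satisfy s_g ≥ (16/17)·y_g for every group g (as is guaranteed when s_g is a round-to-nearest point of y_g in the 3-mantissa-bit floating-point grid). Then for every index i, |x_i| / (s_{g(i)}·c) ≤ 6, where g(i) is the group containing i; i.e., the quantizer never clips: every normalized value lies in [−6, 6], the representable range of FP4 E2M1. -/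
/-- Let `d = 16n` (`n > 0`) and `x ∈ ℝ^d`, `x ≠ 0`, grouped into `n`
groups of 16 consecutive entries. With global scale `c = (max_i |x_i|)/(6·(16/17)·448)`
and normalized group maxima `y_g = (max_{i∈g} |x_i|)/(c·6·(16/17))`, suppose the group
scales `s_g > 0` satisfy `s_g ≥ (16/17)·y_g` for every group. Then for every index,
`|x_i|/(s_{g(i)}·c) ≤ 6`: the quantizer never clips, every normalized value lying in
`[−6, 6]`, the representable range of FP4 E2M1. -/
theorem nvfp4_sr_never_clips (n : ℕ) (hn : 0 < n)
    (x : Fin n → Fin 16 → ℝ) (hx : x ≠ 0)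
    (c : ℝ) (hc : c = (⨆ g, ⨆ j, |x g j|) / (6 * (16 / 17) * 448))
    (y : Fin n → ℝ) (hy : ∀ g, y g = (⨆ j, |x g j|) / (c * (6 * (16 / 17))))
    (s : Fin n → ℝ) (hs : ∀ g, 0 < s g) (hsy : ∀ g, (16 / 17) * y g ≤ s g) :
    ∀ g j, |x g j| / (s g * c) ≤ 6 := by
  intro g j
  obtain ⟨g0, j0, h0⟩ : ∃ g j, x g j ≠ 0 := by
    by_contra h; push_neg at h
    exact hx (funext fun g => funext fun j => h g j)
  have hM : 0 < ⨆ g, ⨆ j, |x g j| := by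
    have h1 : |x g0 j0| ≤ ⨆ j, |x g0 j| :=
      le_ciSup (f := fun j => |x g0 j|) (Set.Finite.bddAbove (Set.finite_range _)) j0
    have h2 : (⨆ j, |x g0 j|) ≤ ⨆ g, ⨆ j, |x g j| :=
      le_ciSup (f := fun g => ⨆ j, |x g j|) (Set.Finite.bddAbove (Set.finite_range _)) g0
    have h3 := abs_pos.mpr h0
    linarith
  have hc0 : 0 < c := by rw [hc]; exact div_pos hM (by norm_num)
  have hle : |x g j| ≤ ⨆ j, |x g j| :=
    le_ciSup (f := fun j => |x g j|) (Set.Finite.bddAbove (Set.finite_range _)) j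
  have hs' := hsy g
  rw [hy g] at hs'
  have hrw : (16/17 : ℝ) * ((⨆ j, |x g j|) / (c * (6 * (16/17))))
      = (⨆ j, |x g j|) / (6 * c) := by
    field_simp
  rw [hrw, div_le_iff₀ (by positivity)] at hs'
  rw [div_le_iff₀ (mul_pos (hs g) hc0)]
  nlinarith [hle, hs']
end

section
/- There exist a real number x and independent real-valued random variables Y₁, Y₂ with E[Y₁] = E[Y₂] = x such that the estimator Z defined by Z = Y₁ if |Y₁ − x| ≤ |Y₂ − x| and Z = Y₂ otherwise satisfies E[Z] ≠ x. Concretely, take x = 1/4, Y₁ equal to 1 with probability 1/4 and 0 otherwise, and Y₂ equal to 2 with probability 1/8 and 0 otherwise; then E[Z] = 1/32 ≠ 1/4. Hence selecting, per realization, the lower-error branch among individually unbiased stochastic quantizations introduces bias. -/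
/-!
Take `Y₁ ~ Ber(1, 0, 1/4)` and `Y₂ ~ Ber(2, 0, 1/8)` as the coordinates of a product measure on
`ℝ × ℝ`; both have mean `1/4`. Whenever `Y₁ = 0` it is selected, since no value of `Y₂` is closer
to `1/4`; on the atom `(1, 0)` the closer value `0` is selected; only on `(1, 2)` is the output
nonzero, namely `1`. Hence `E[Z] = P(Y₁ = 1, Y₂ = 2) = 1/32`: selection discards the rare large
values that made each branch unbiased.
-/

open MeasureTheory ProbabilityTheory unitInterval
open scoped ENNReal

lemma unitInterval.coe_toNNReal_eq_ofReal (p : I) : (toNNReal p : ℝ≥0∞) = ENNReal.ofReal p := by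
  rw [ENNReal.ofReal, Real.toNNReal_of_nonneg p.2.1]
  rfl

section Bernoulli

variable {X Y : Type*} [MeasurableSpace X] [MeasurableSingletonClass X]
  [MeasurableSpace Y] [MeasurableSingletonClass Y]

lemma bernoulliMeasure_apply_singleton_left {x y : X} (hxy : x ≠ y) (p : I) :
    Ber(x, y, p) {x} = ENNReal.ofReal p := by
  rw [bernoulliMeasure_apply_of_mem_of_notMem p (measurableSet_singleton x) rfl hxy.symm,
    coe_toNNReal_eq_ofReal]

lemma bernoulliMeasure_apply_singleton_right {x y : X} (hxy : x ≠ y) (p : I) :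
    Ber(x, y, p) {y} = ENNReal.ofReal (1 - p) := by
  rw [bernoulliMeasure_apply_of_notMem_of_mem p (measurableSet_singleton y) hxy rfl,
    coe_toNNReal_eq_ofReal, coe_symm_eq]

variable {E : Type*} [NormedAddCommGroup E] [NormedSpace ℝ E] [CompleteSpace E]

lemma integral_prod_bernoulliMeasure (x y : X) (x' y' : Y) (p q : I) {f : X × Y → E}
    (hf : AEStronglyMeasurable f (Ber(x, y, p).prod Ber(x', y', q))) :
    ∫ z, f z ∂(Ber(x, y, p).prod Ber(x', y', q)) =
      (p : ℝ) • ((q : ℝ) • f (x, x') + (1 - q : ℝ) • f (x, y')) +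
        (1 - p : ℝ) • ((q : ℝ) • f (y, x') + (1 - q : ℝ) • f (y, y')) := by
  have hint : Integrable f (Ber(x, y, p).prod Ber(x', y', q)) :=
    (integrable_prod_iff hf).2
      ⟨ae_of_all _ fun _ ↦ integrable_bernoulliMeasure .., integrable_bernoulliMeasure ..⟩
  simp only [integral_prod f hint, integral_bernoulliMeasure]

end Bernoulli

section ProdMarginals

variable {α β : Type*} [MeasurableSpace α] [MeasurableSpace β] (μ : Measure α) (ν : Measure β)

lemma Measure.prod_apply_fst_eq [IsProbabilityMeasure ν] (a : α) :
    μ.prod ν {ω | ω.1 = a} = μ {a} := by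
  have : {ω : α × β | ω.1 = a} = {a} ×ˢ Set.univ := by ext; simp
  rw [this, Measure.prod_prod, measure_univ, mul_one]

lemma Measure.prod_apply_snd_eq [IsProbabilityMeasure μ] [SFinite ν] (b : β) :
    μ.prod ν {ω | ω.2 = b} = ν {b} := by
  have : {ω : α × β | ω.2 = b} = Set.univ ×ˢ {b} := by ext; simp
  rw [this, Measure.prod_prod, measure_univ, one_mul]

end ProdMarginals

/-- There exist a real `x` and independent real random variables
`Y₁, Y₂` with `E[Y₁] = E[Y₂] = x` such that the lower-error branch selector
`Z = Y₁` if `|Y₁ − x| ≤ |Y₂ − x|` and `Z = Y₂` otherwise has `E[Z] ≠ x`. Concretely,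
`x = 1/4`, `Y₁ = 1` w.p. `1/4` (else `0`), `Y₂ = 2` w.p. `1/8` (else `0`) gives
`E[Z] = 1/32 ≠ 1/4`: selecting the lower-error branch among individually unbiased
stochastic quantizations introduces bias. -/
theorem branch_selection_introduces_bias :
    ∃ (x : ℝ) (Ω : Type) (_ : MeasurableSpace Ω) (μ : Measure Ω)
      (_ : IsProbabilityMeasure μ) (Y₁ Y₂ : Ω → ℝ),
      Measurable Y₁ ∧ Measurable Y₂ ∧ IndepFun Y₁ Y₂ μ ∧
      x = 1 / 4 ∧
      μ {ω | Y₁ ω = 1} = 1 / 4 ∧ μ {ω | Y₁ ω = 0} = 3 / 4 ∧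
      μ {ω | Y₂ ω = 2} = 1 / 8 ∧ μ {ω | Y₂ ω = 0} = 7 / 8 ∧
      (∫ ω, Y₁ ω ∂μ = x) ∧ (∫ ω, Y₂ ω ∂μ = x) ∧
      (∫ ω, (if |Y₁ ω - x| ≤ |Y₂ ω - x| then Y₁ ω else Y₂ ω) ∂μ = 1 / 32) ∧
      (1 / 32 : ℝ) ≠ x := by
  let p₁ : I := ⟨1 / 4, by norm_num, by norm_num⟩
  let p₂ : I := ⟨1 / 8, by norm_num, by norm_num⟩
  refine ⟨1 / 4, ℝ × ℝ, inferInstance, Ber((1 : ℝ), 0, p₁).prod Ber((2 : ℝ), 0, p₂),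
    inferInstance, Prod.fst, Prod.snd, measurable_fst, measurable_snd,
    indepFun_prod measurable_id measurable_id, rfl, ?_, ?_, ?_, ?_, ?_, ?_, ?_, by norm_num⟩
  · rw [Measure.prod_apply_fst_eq, bernoulliMeasure_apply_singleton_left one_ne_zero]
    norm_num [p₁, ENNReal.ofReal_div_of_pos]
  · rw [Measure.prod_apply_fst_eq, bernoulliMeasure_apply_singleton_right one_ne_zero]
    norm_num [p₁, ENNReal.ofReal_div_of_pos]
  · rw [Measure.prod_apply_snd_eq, bernoulliMeasure_apply_singleton_left two_ne_zero]
    norm_num [p₂, ENNReal.ofReal_div_of_pos]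
  · rw [Measure.prod_apply_snd_eq, bernoulliMeasure_apply_singleton_right two_ne_zero]
    norm_num [p₂, ENNReal.ofReal_div_of_pos]
  · rw [integral_prod_bernoulliMeasure _ _ _ _ _ _ measurable_fst.aestronglyMeasurable]
    norm_num [p₁]
  · rw [integral_prod_bernoulliMeasure _ _ _ _ _ _ measurable_snd.aestronglyMeasurable]
    norm_num [p₂]
  · have hZ : Measurable fun ω : ℝ × ℝ ↦ if |ω.1 - 1 / 4| ≤ |ω.2 - 1 / 4| then ω.1 else ω.2 :=
      Measurable.ite (measurableSet_le (by fun_prop) (by fun_prop)) measurable_fst measurable_snd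
    rw [integral_prod_bernoulliMeasure _ _ _ _ _ _ hZ.aestronglyMeasurable]
    norm_num [p₁, p₂]
end

section
/- Let d be a positive multiple of 16, x ∈ ℝ^d with x ≠ 0, and let the clipping parameter s satisfy 0 < s ≤ 6·(16/17). Partition {1,…,d} into groups of 16 consecutive indices, set the global scale c = (max_i |x_i|)/(s·256), and for each group g set the normalized group maximum y_g = (max_{i ∈ g} |x_i|)/(c·s). Suppose the group scales s_g > 0 satisfy s_g ≥ (16/17)·y_g for every group g (as is guaranteed when s_g is a round-to-nearest point of y_g in the 3-mantissa-bit floating-point grid). Then for every index i, |x_i|/(s_{g(i)}·c) ≤ (17/16)·s ≤ 6, where g(i) is the group containing i; i.e., setting s to 6·(16/17) or lower makes the clipping round-to-nearest NVFP4 quantizer Q_RTN non-clipping. -/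
/-- Let `d = 16n` (`n > 0`), `x ∈ ℝ^d` with `x ≠ 0` grouped into `n`
groups of 16 consecutive entries, and let the clipping parameter satisfy
`0 < s ≤ 6·(16/17)`. With global scale `c = (max_i |x_i|)/(s·256)` and normalized group
maxima `y_g = (max_{i∈g} |x_i|)/(c·s)`, suppose the group scales `s_g > 0` satisfy
`s_g ≥ (16/17)·y_g` for every group. Then for every index,
`|x_i|/(s_{g(i)}·c) ≤ (17/16)·s ≤ 6`: setting `s` to `6·(16/17)` or lower makes the
clipping round-to-nearest NVFP4 quantizer `Q_RTN` non-clipping. -/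
theorem nvfp4_rtn_nonclipping (n : ℕ) (hn : 0 < n)
    (x : Fin n → Fin 16 → ℝ) (hx : x ≠ 0)
    (s : ℝ) (hs₀ : 0 < s) (hs₁ : s ≤ 6 * (16 / 17))
    (c : ℝ) (hc : c = (⨆ g, ⨆ j, |x g j|) / (s * 256))
    (y : Fin n → ℝ) (hy : ∀ g, y g = (⨆ j, |x g j|) / (c * s))
    (sg : Fin n → ℝ) (hsg : ∀ g, 0 < sg g) (hsgy : ∀ g, (16 / 17) * y g ≤ sg g) :
    ∀ g j, |x g j| / (sg g * c) ≤ (17 / 16) * s ∧ (17 / 16) * s ≤ 6 := by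
  have hne : Nonempty (Fin n) := ⟨⟨0, hn⟩⟩
  -- the global max is positive
  obtain ⟨g₀, j₀, hxg⟩ : ∃ g j, x g j ≠ 0 := by
    by_contra h
    push_neg at h
    exact hx (funext fun g => funext fun j => h g j)
  have hM : 0 < ⨆ g, ⨆ j, |x g j| := by
    have h1 : |x g₀ j₀| ≤ ⨆ j, |x g₀ j| :=
      le_ciSup (f := fun j => |x g₀ j|) (Set.Finite.bddAbove (Set.finite_range _)) j₀
    have h2 : (⨆ j, |x g₀ j|) ≤ ⨆ g, ⨆ j, |x g j| :=
      le_ciSup (f := fun g => ⨆ j, |x g j|) (Set.Finite.bddAbove (Set.finite_range _)) g₀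
    have := abs_pos.mpr hxg
    linarith
  have hcpos : 0 < c := by
    rw [hc]; positivity
  intro g j
  have hcs : 0 < c * s := mul_pos hcpos hs₀
  have hxle : |x g j| ≤ ⨆ j, |x g j| :=
    le_ciSup (f := fun j => |x g j|) (Set.Finite.bddAbove (Set.finite_range _)) j
  have hyeq : y g * (c * s) = ⨆ j, |x g j| := by
    rw [hy g, div_mul_cancel₀ _ (ne_of_gt hcs)]
  have hkey : |x g j| ≤ (17 / 16) * sg g * (c * s) := by
    have h1 : y g ≤ (17 / 16) * sg g := by
      have := hsgy g; linarith
    calc |x g j| ≤ ⨆ j, |x g j| := hxle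
      _ = y g * (c * s) := hyeq.symm
      _ ≤ (17 / 16) * sg g * (c * s) := by
          exact mul_le_mul_of_nonneg_right h1 hcs.le
  constructor
  · rw [div_le_iff₀ (mul_pos (hsg g) hcpos)]
    calc |x g j| ≤ (17 / 16) * sg g * (c * s) := hkey
      _ = (17 / 16) * s * (sg g * c) := by ring
  · linarith
end
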